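/- arXiv:1210.7524 — 6 statements merged into one kernel-verified Lean document; each statement's English description precedes it below -/
import Mathlib

section
/- If Φ : Mₙ(ℂ) → Mₗ(ℂ) is a strictly positive linear map (i.e., it maps positive definite matrices to positive definite matrices) and 0 ≤ p ≤ 1, then the map A ↦ Φ(A^{-p})^{-1} on positive definite matrices is operator concave, i.e., Φ(((A+B)/2)^{-p})^{-1} ≥ (Φ(A^{-p})^{-1} + Φ(B^{-p})^{-1})/2 in the Loewner order for all positive definite A, B. -/
open Matrix
open scoped ComplexOrder

/-- Real power of a Hermitian matrix via the spectral theorem (junk value `0` on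
non-Hermitian input). -/
noncomputable def mpow {n : Type*} [Fintype n] [DecidableEq n] (A : Matrix n n ℂ) (p : ℝ) :
    Matrix n n ℂ :=
  if hA : A.IsHermitian then
    (hA.eigenvectorUnitary : Matrix n n ℂ) *
      Matrix.diagonal (fun i => ((hA.eigenvalues i ^ p : ℝ) : ℂ)) *
      star (hA.eigenvectorUnitary : Matrix n n ℂ)
  else 0

/-- Loewner order: `loewner A B` iff `B - A` is positive semidefinite. -/
def loewner {n : Type*} [Fintype n] (A B : Matrix n n ℂ) : Prop := (B - A).PosSemidef

/-- Smallest eigenvalue of a Hermitian matrix (junk value `0` on non-Hermitian input). -/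
noncomputable def lambdaMin {n : Type*} [Fintype n] [DecidableEq n] (A : Matrix n n ℂ) : ℝ :=
  if hA : A.IsHermitian then ⨅ i, hA.eigenvalues i else 0

/-- Largest eigenvalue of a Hermitian matrix; for positive definite `A` this is the
operator norm `‖A‖∞` (junk value `0` on non-Hermitian input). -/
noncomputable def lambdaMax {n : Type*} [Fintype n] [DecidableEq n] (A : Matrix n n ℂ) : ℝ :=
  if hA : A.IsHermitian then ⨆ i, hA.eigenvalues i else 0

/-- The `j`-th smallest eigenvalue (counted with multiplicity, increasing order)
of a Hermitian matrix. -/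
noncomputable def eigUp {k : ℕ} (A : Matrix (Fin k) (Fin k) ℂ) (j : Fin k) : ℝ :=
  if hA : A.IsHermitian then (hA.eigenvalues ∘ Tuple.sort hA.eigenvalues) j else 0

/-- The `j`-th largest eigenvalue of a Hermitian matrix. -/
noncomputable def eigDown {k : ℕ} (A : Matrix (Fin k) (Fin k) ℂ) (j : Fin k) : ℝ :=
  eigUp A j.rev

/-!
Write `f X = Φ(X⁻¹)⁻¹`. Since `t ↦ t ^ p` is operator concave for `0 ≤ p ≤ 1`,
`(A^p + B^p)/2 ≤ ((A+B)/2)^p`, and `f` is monotone because inversion is antitone and `Φ` is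
positive; so it suffices that `f` is midpoint concave. As `f (c • X) = c • f X`, this is the
superadditivity `f X + f Y ≤ f (X + Y)` (Ando). Congruence by `(X + Y)^(-1/2)` reduces it to the
case `X + Y = 1`, in which `X⁻¹`, `Y⁻¹` and `1` are simultaneously diagonal; on each spectral
projection `P` of `X` with eigenvalue `t` the needed inequality is
`(U + V)* Φ(P) (U + V) ≤ t⁻¹ U* Φ(P) U + (1 - t)⁻¹ V* Φ(P) V`. Superadditivity then follows from
the variational bound `W* + W - W* R W ≤ R⁻¹` with `R = Φ((X + Y)⁻¹)` and `W = f X + f Y`.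
-/

open scoped MatrixOrder Matrix.Norms.L2Operator Topology

namespace Matrix

section SingleIndex

variable {n : Type*} [Fintype n] [DecidableEq n]

theorem PosSemidef.mpow_eq_rpow {A : Matrix n n ℂ} (hA : A.PosSemidef) (p : ℝ) :
    mpow A p = A ^ p := by
  rw [CFC.rpow_eq_cfc_real (nonneg_iff_posSemidef.mpr hA), hA.1.cfc_eq, mpow, dif_pos hA.1]
  rfl

theorem PosDef.rpow {A : Matrix n n ℂ} (hA : A.PosDef) (p : ℝ) : (A ^ p).PosDef :=
  isStrictlyPositive_iff_posDef.mp
    (IsStrictlyPositive.rpow A p (isStrictlyPositive_iff_posDef.mpr hA))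

theorem PosDef.inv_rpow {A : Matrix n n ℂ} (hA : A.PosDef) (p : ℝ) : (A ^ p)⁻¹ = A ^ (-p) :=
  inv_eq_right_inv (CFC.rpow_mul_rpow_neg p (isStrictlyPositive_iff_posDef.mpr hA))

theorem PosDef.inv_le_inv {A B : Matrix n n ℂ} (hA : A.PosDef) (h : A ≤ B) : B⁻¹ ≤ A⁻¹ := by
  simpa only [nonsing_inv_eq_ringInverse] using
    CStarAlgebra.ringInverse_le_ringInverse h (isStrictlyPositive_iff_posDef.mpr hA)

theorem inv_real_smul {M : Matrix n n ℂ} (hM : IsUnit M) {c : ℝ} (hc : c ≠ 0) :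
    (c • M)⁻¹ = c⁻¹ • M⁻¹ :=
  inv_eq_left_inv <| by
    rw [smul_mul_smul_comm, inv_mul_cancel₀ hc, one_smul,
      nonsing_inv_mul _ ((isUnit_iff_isUnit_det M).mp hM)]

theorem PosDef.star_add_sub_star_mul_mul_le_inv {R : Matrix n n ℂ} (hR : R.PosDef)
    (W : Matrix n n ℂ) : star W + W - star W * R * W ≤ R⁻¹ := by
  have hdet : IsUnit R.det := (isUnit_iff_isUnit_det R).mp hR.isUnit
  have h : R⁻¹ - (star W + W - star W * R * W) = star (W - R⁻¹) * R * (W - R⁻¹) := by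
    simp only [star_sub, hR.inv.1.star_eq, sub_mul, mul_sub, mul_assoc, mul_nonsing_inv _ hdet,
      nonsing_inv_mul_cancel_left _ _ hdet, mul_one]
    abel
  rw [← sub_nonneg, h]
  exact star_left_conjugate_nonneg (nonneg_iff_posSemidef.mpr hR.posSemidef) _

theorem star_add_mul_mul_add_le {S : Matrix n n ℂ} (hS : 0 ≤ S) (U V : Matrix n n ℂ) {t : ℝ}
    (ht0 : 0 < t) (ht1 : t < 1) :
    star (U + V) * S * (U + V) ≤ t⁻¹ • (star U * S * U) + (1 - t)⁻¹ • (star V * S * V) := by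
  set W := (1 - t) • U - t • V
  have hW : t⁻¹ • (star U * S * U) + (1 - t)⁻¹ • (star V * S * V) - star (U + V) * S * (U + V)
      = (t * (1 - t))⁻¹ • (star W * S * W) := by
    have : 1 - t ≠ 0 := by linarith
    simp only [W, star_sub, star_smul, star_trivial, star_add, sub_mul, mul_sub, add_mul, mul_add,
      smul_mul_assoc, mul_smul_comm, smul_sub, smul_smul]
    match_scalars <;> field_simp
    ring
  rw [← sub_nonneg, hW]
  exact smul_nonneg (inv_nonneg.mpr (mul_pos ht0 (sub_pos.mpr ht1)).le)
    (star_left_conjugate_nonneg hS W)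

namespace IsHermitian

variable {T : Matrix n n ℂ} (hT : T.IsHermitian)

noncomputable def eigenprojection (k : n) : Matrix n n ℂ :=
  (hT.eigenvectorUnitary : Matrix n n ℂ) * single k k 1 *
    star (hT.eigenvectorUnitary : Matrix n n ℂ)

theorem eigenprojection_nonneg (k : n) : 0 ≤ hT.eigenprojection k := by
  refine star_right_conjugate_nonneg ?_ _
  have h := star_mul_self_nonneg (single k k (1 : ℂ))
  rwa [star_eq_conjTranspose, conjTranspose_single, star_one, single_mul_single_same,
    mul_one] at h

theorem cfc_eq_sum_smul_eigenprojection (g : ℝ → ℝ) :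
    cfc g T = ∑ k, g (hT.eigenvalues k) • hT.eigenprojection k := by
  rw [hT.cfc_eq, IsHermitian.cfc, Unitary.conjStarAlgAut_apply, ← sum_single_eq_diagonal,
    Finset.mul_sum, Finset.sum_mul]
  refine Finset.sum_congr rfl fun k _ => ?_
  rw [eigenprojection, ← smul_mul_assoc, ← mul_smul_comm, smul_single, Function.comp_apply,
    Function.comp_apply]
  simp [RCLike.real_smul_eq_coe_smul (K := ℂ)]

theorem eigenvalues_lt_one (h1T : (1 - T).PosDef) (k : n) : hT.eigenvalues k < 1 := by
  have hmem : 1 - hT.eigenvalues k ∈ spectrum ℝ (1 - T) := by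
    rw [← map_one (algebraMap ℝ (Matrix n n ℂ)), ← spectrum.singleton_sub_eq]
    exact Set.sub_mem_sub rfl (hT.eigenvalues_mem_spectrum_real k)
  linarith [(isStrictlyPositive_iff_posDef.mpr h1T).spectrum_pos hmem]

end IsHermitian

end SingleIndex

variable {n l : Type*} [Fintype n] [DecidableEq n] [Fintype l] [DecidableEq l]

omit [Fintype n] in
theorem monotone_of_map_posDef {Φ : Matrix n n ℂ →ₗ[ℂ] Matrix l l ℂ}
    (hΦ : ∀ A : Matrix n n ℂ, A.PosDef → (Φ A).PosDef) : Monotone Φ := by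
  suffices h : ∀ M, 0 ≤ M → 0 ≤ Φ M by
    intro A B hAB
    simpa only [sub_nonneg, map_sub] using h (B - A) (sub_nonneg.mpr hAB)
  intro M hM
  have hpos : ∀ ε : ℝ, 0 < ε → 0 ≤ Φ M + ε • Φ 1 := fun ε hε => by
    rw [← LinearMap.map_smul_of_tower, ← map_add]
    exact nonneg_iff_posSemidef.mpr (hΦ _ <|
      PosDef.posSemidef_add (nonneg_iff_posSemidef.mp hM) (PosDef.one.smul hε)).posSemidef
  have hlim : Filter.Tendsto (fun ε : ℝ => Φ M + ε • Φ 1) (𝓝[>] 0) (𝓝 (Φ M)) := by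
    refine ((continuous_const.add (continuous_id.smul continuous_const)).tendsto' 0 _ ?_).mono_left
      nhdsWithin_le_nhds
    simp
  exact ge_of_tendsto hlim (eventually_nhdsWithin_of_forall hpos)

theorem star_add_mul_map_one_mul_add_le {T : Matrix n n ℂ} (hT : T.PosDef) (h1T : (1 - T).PosDef)
    {Ψ : Matrix n n ℂ →ₗ[ℂ] Matrix l l ℂ} (hΨ : Monotone Ψ) (U V : Matrix l l ℂ) :
    star (U + V) * Ψ 1 * (U + V) ≤ star U * Ψ T⁻¹ * U + star V * Ψ (1 - T)⁻¹ * V := by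
  have hone : (1 : Matrix n n ℂ) = cfc (fun _ => (1 : ℝ)) T := (cfc_const_one ℝ T).symm
  have hinv : T⁻¹ = cfc (fun x : ℝ => x⁻¹) T := by
    rw [nonsing_inv_eq_ringInverse,
      cfc_ringInverse_id T (isStrictlyPositive_iff_posDef.mpr hT).isUnit]
  have hinv' : (1 - T)⁻¹ = cfc (fun x : ℝ => (1 - x)⁻¹) T := by
    rw [cfc_inv (fun x : ℝ => 1 - x) T ?_, cfc_sub (fun _ : ℝ => (1 : ℝ)) (fun x : ℝ => x) T,
      cfc_const_one ℝ T, cfc_id' ℝ T, nonsing_inv_eq_ringInverse]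
    rw [hT.1.spectrum_real_eq_range_eigenvalues]
    rintro - ⟨k, rfl⟩
    exact (sub_pos.mpr (hT.1.eigenvalues_lt_one h1T k)).ne'
  rw [hinv', hinv, hone]
  simp only [hT.1.cfc_eq_sum_smul_eigenprojection, map_sum, LinearMap.map_smul_of_tower,
    Finset.mul_sum, Finset.sum_mul, smul_mul_assoc, mul_smul_comm, one_smul,
    ← Finset.sum_add_distrib]
  refine Finset.sum_le_sum fun k _ => star_add_mul_mul_add_le ?_ U V (hT.eigenvalues_pos k)
    (hT.1.eigenvalues_lt_one h1T k)
  simpa using hΨ (hT.1.eigenprojection_nonneg k)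

theorem star_add_mul_map_inv_add_mul_add_le {Φ : Matrix n n ℂ →ₗ[ℂ] Matrix l l ℂ}
    (hΦ : Monotone Φ) {X Y : Matrix n n ℂ} (hX : X.PosDef) (hY : Y.PosDef) (U V : Matrix l l ℂ) :
    star (U + V) * Φ (X + Y)⁻¹ * (U + V) ≤ star U * Φ X⁻¹ * U + star V * Φ Y⁻¹ * V := by
  have hS : IsStrictlyPositive (X + Y) := isStrictlyPositive_iff_posDef.mpr (hX.add hY)
  have hpow (x y : ℝ) : (X + Y) ^ x * (X + Y) ^ y = (X + Y) ^ (x + y) :=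
    (CFC.rpow_add hS.isUnit).symm
  set H := (X + Y) ^ (-(1 / 2) : ℝ)
  have hH : IsStrictlyPositive H := IsStrictlyPositive.rpow (X + Y) _ hS
  have hHdet : IsUnit H.det := (isUnit_iff_isUnit_det H).mp hH.isUnit
  have hHS : H * (X + Y) * H = 1 := by
    rw [← CFC.rpow_one (X + Y), hpow, hpow, ← CFC.rpow_zero (X + Y)]
    norm_num
  have hHH : H * H = (X + Y)⁻¹ := by
    refine (inv_eq_left_inv ?_).symm
    rw [← CFC.rpow_one (X + Y), hpow, hpow, ← CFC.rpow_zero (X + Y)]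
    norm_num
  have hconj (M : Matrix n n ℂ) : H * (H * (M * H))⁻¹ * H = M⁻¹ := by
    simp only [mul_inv_rev, mul_assoc, mul_nonsing_inv_cancel_left _ _ hHdet,
      nonsing_inv_mul _ hHdet, mul_one]
  have hHconj {M : Matrix n n ℂ} (hM : M.PosDef) : (H * M * H).PosDef :=
    isStrictlyPositive_iff_posDef.mp <| IsStrictlyPositive.conjugate_of_isUnit_of_isSelfAdjoint
      M H hH.isUnit hH.isSelfAdjoint (isStrictlyPositive_iff_posDef.mpr hM)
  let Ψ : Matrix n n ℂ →ₗ[ℂ] Matrix l l ℂ := Φ ∘ₗ LinearMap.mulLeft ℂ H ∘ₗ LinearMap.mulRight ℂ H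
  have hΨ_apply (M : Matrix n n ℂ) : Ψ M = Φ (H * M * H) := by simp [Ψ, mul_assoc]
  have hΨ : Monotone Ψ := fun A B h => by
    simpa only [hΨ_apply] using hΦ (hH.isSelfAdjoint.conjugate_le_conjugate h)
  have h1T : 1 - H * X * H = H * Y * H := by rw [← hHS]; noncomm_ring
  have key := star_add_mul_map_one_mul_add_le (hHconj hX) (h1T ▸ hHconj hY) hΨ U V
  rwa [h1T, hΨ_apply, hΨ_apply, hΨ_apply, mul_one, hHH, mul_assoc H X, mul_assoc H Y, hconj,
    hconj] at key

section MapInvInv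

variable {Φ : Matrix n n ℂ →ₗ[ℂ] Matrix l l ℂ} (hΦ : ∀ A : Matrix n n ℂ, A.PosDef → (Φ A).PosDef)
include hΦ

theorem map_inv_inv_add_le {X Y : Matrix n n ℂ} (hX : X.PosDef) (hY : Y.PosDef) :
    (Φ X⁻¹)⁻¹ + (Φ Y⁻¹)⁻¹ ≤ (Φ (X + Y)⁻¹)⁻¹ := by
  have hP := hΦ _ hX.inv
  have hQ := hΦ _ hY.inv
  have hself {R : Matrix l l ℂ} (hR : R.PosDef) : star R⁻¹ * R * R⁻¹ = R⁻¹ := by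
    rw [hR.inv.1.star_eq,
      mul_nonsing_inv_cancel_right _ _ ((isUnit_iff_isUnit_det R).mp hR.isUnit)]
  set W := (Φ X⁻¹)⁻¹ + (Φ Y⁻¹)⁻¹
  have hW : star W = W := (hP.inv.add hQ.inv).1
  calc W = star W + W - (star (Φ X⁻¹)⁻¹ * Φ X⁻¹ * (Φ X⁻¹)⁻¹ +
        star (Φ Y⁻¹)⁻¹ * Φ Y⁻¹ * (Φ Y⁻¹)⁻¹) := by
        rw [hself hP, hself hQ, hW]; exact (add_sub_cancel_right W W).symm
    _ ≤ star W + W - star W * Φ (X + Y)⁻¹ * W := sub_le_sub_left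
        (star_add_mul_map_inv_add_mul_add_le (monotone_of_map_posDef hΦ) hX hY _ _) _
    _ ≤ (Φ (X + Y)⁻¹)⁻¹ := (hΦ _ (hX.add hY).inv).star_add_sub_star_mul_mul_le_inv W

theorem map_inv_inv_smul {X : Matrix n n ℂ} (hX : X.PosDef) {c : ℝ} (hc : c ≠ 0) :
    (Φ (c • X)⁻¹)⁻¹ = c • (Φ X⁻¹)⁻¹ := by
  rw [inv_real_smul hX.isUnit hc, LinearMap.map_smul_of_tower,
    inv_real_smul (hΦ _ hX.inv).isUnit (inv_ne_zero hc), inv_inv]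

theorem map_inv_inv_midpoint_le {X Y : Matrix n n ℂ} (hX : X.PosDef) (hY : Y.PosDef) :
    (1 / 2 : ℝ) • ((Φ X⁻¹)⁻¹ + (Φ Y⁻¹)⁻¹) ≤ (Φ ((1 / 2 : ℝ) • (X + Y))⁻¹)⁻¹ := by
  rw [map_inv_inv_smul hΦ (hX.add hY) (by norm_num)]
  exact smul_le_smul_of_nonneg_left (map_inv_inv_add_le hΦ hX hY) (by norm_num)

theorem map_inv_inv_mono {X Y : Matrix n n ℂ} (hX : X.PosDef) (hXY : X ≤ Y) :
    (Φ X⁻¹)⁻¹ ≤ (Φ Y⁻¹)⁻¹ := by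
  have hY : Y.PosDef := isStrictlyPositive_iff_posDef.mp
    ((isStrictlyPositive_iff_posDef.mpr hX).of_le hXY)
  exact (hΦ _ hY.inv).inv_le_inv (monotone_of_map_posDef hΦ (hX.inv_le_inv hXY))

end MapInvInv

end Matrix

/-- If `Φ` is a strictly positive linear map and `0 ≤ p ≤ 1`, then
`A ↦ Φ(A^{-p})⁻¹` is operator (midpoint) concave on positive definite matrices. -/
theorem stmt0 {n l : Type*} [Fintype n] [DecidableEq n] [Fintype l] [DecidableEq l]
    (Φ : Matrix n n ℂ →ₗ[ℂ] Matrix l l ℂ)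
    (hΦ : ∀ A : Matrix n n ℂ, A.PosDef → (Φ A).PosDef)
    (p : ℝ) (hp0 : 0 ≤ p) (hp1 : p ≤ 1)
    (A B : Matrix n n ℂ) (hA : A.PosDef) (hB : B.PosDef) :
    loewner ((1/2 : ℝ) • ((Φ (mpow A (-p)))⁻¹ + (Φ (mpow B (-p)))⁻¹))
      ((Φ (mpow ((1/2 : ℝ) • (A + B)) (-p)))⁻¹) := by
  have hC : ((1 / 2 : ℝ) • (A + B)).PosDef := (hA.add hB).smul (by norm_num)
  rw [hA.posSemidef.mpow_eq_rpow, hB.posSemidef.mpow_eq_rpow, hC.posSemidef.mpow_eq_rpow,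
    ← hA.inv_rpow, ← hB.inv_rpow, ← hC.inv_rpow]
  have hconcave : (1 / 2 : ℝ) • (A ^ p + B ^ p) ≤ ((1 / 2 : ℝ) • (A + B)) ^ p := by
    simpa only [smul_add] using (CFC.concaveOn_rpow ⟨hp0, hp1⟩).2
      (nonneg_iff_posSemidef.mpr hA.posSemidef) (nonneg_iff_posSemidef.mpr hB.posSemidef)
      (by norm_num : (0 : ℝ) ≤ 1 / 2) (by norm_num : (0 : ℝ) ≤ 1 / 2) (add_halves 1)
  exact (map_inv_inv_midpoint_le hΦ (hA.rpow p) (hB.rpow p)).trans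
    (map_inv_inv_mono hΦ (((hA.rpow p).add (hB.rpow p)).smul (by norm_num)) hconcave)
end

section
/- For r ≥ 1 and any positive semidefinite matrix C ∈ Mₘ(ℂ), one has the variational formula Tr(C^{1/r}) = (1/r) · inf over positive definite B ∈ Mₘ(ℂ) of Tr(C B^{1-r} + (r-1)B). -/
/-!
Diagonalise `B = U diag(β) U⋆`. Then `Tr(C B^{1-r} + (r-1) B) = ∑ᵢ (cᵢ βᵢ^{1-r} + (r-1) βᵢ)`, where
`cᵢ` are the diagonal entries of `U⋆ C U`, and weighted AM–GM bounds each summand below by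
`r cᵢ^{1/r}`. If `V` diagonalises `C`, the `cᵢ` are averages of the eigenvalues of `C` with respect
to the doubly stochastic matrix `|(U⋆V)ᵢₖ|²`, so concavity of `x ↦ x^{1/r}` gives
`∑ᵢ cᵢ^{1/r} ≥ Tr C^{1/r}`. Conversely `B = (C + ε)^{1/r}`, diagonal in the eigenbasis of `C`,
has value at most `r Tr (C + ε)^{1/r}`, which tends to `r Tr C^{1/r}` as `ε → 0`.
-/

open Matrix
open scoped ComplexOrder

theorem mul_rpow_one_div_le_young {r c b : ℝ} (hr : 1 ≤ r) (hc : 0 ≤ c) (hb : 0 < b) :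
    r * c ^ (1 / r) ≤ c * b ^ (1 - r) + (r - 1) * b := by
  have hr0 : 0 < r := zero_lt_one.trans_le hr
  have hw : 0 ≤ 1 - 1 / r := sub_nonneg.2 ((div_le_one hr0).2 hr)
  have amgm := Real.geom_mean_le_arith_mean2_weighted (by positivity) hw
    (by positivity : 0 ≤ c * b ^ (1 - r)) hb.le (add_sub_cancel _ _)
  have hgeom : (c * b ^ (1 - r)) ^ (1 / r) * b ^ (1 - 1 / r) = c ^ (1 / r) := by
    rw [Real.mul_rpow hc (by positivity), ← Real.rpow_mul hb.le, mul_assoc, ← Real.rpow_add hb,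
      show (1 - r) * (1 / r) + (1 - 1 / r) = 0 by field_simp; ring, Real.rpow_zero, mul_one]
  calc r * c ^ (1 / r) ≤ r * (1 / r * (c * b ^ (1 - r)) + (1 - 1 / r) * b) := by
        rw [← hgeom]; gcongr
    _ = c * b ^ (1 - r) + (r - 1) * b := by field_simp

namespace Matrix

variable {n : Type*} [Fintype n] [DecidableEq n]

theorem diagonal_map_mul_eq_mul_diagonal_map {d e : n → ℝ} {W : Matrix n n ℂ}
    (h : diagonal (fun i => (d i : ℂ)) * W = W * diagonal (fun j => (e j : ℂ))) (f : ℝ → ℝ) :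
    diagonal (fun i => (f (d i) : ℂ)) * W = W * diagonal (fun j => (f (e j) : ℂ)) := by
  ext i j
  have hij := congr_fun₂ h i j
  simp only [diagonal_mul, mul_diagonal] at hij ⊢
  rcases eq_or_ne (W i j) 0 with hW | hW
  · simp [hW]
  · have hde : d i = e j := by
      exact_mod_cast mul_right_cancel₀ hW (hij.trans (mul_comm _ _))
    rw [hde, mul_comm]

theorem unitary_conj_diagonal_map_eq {U V : Matrix n n ℂ} (hU : U ∈ unitaryGroup n ℂ)
    (hV : V ∈ unitaryGroup n ℂ) {d e : n → ℝ}
    (h : U * diagonal (fun i => (d i : ℂ)) * star U = V * diagonal (fun i => (e i : ℂ)) * star V)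
    (f : ℝ → ℝ) :
    U * diagonal (fun i => (f (d i) : ℂ)) * star U =
      V * diagonal (fun i => (f (e i) : ℂ)) * star V := by
  have intertwine : diagonal (fun i => (d i : ℂ)) * (star U * V) =
      (star U * V) * diagonal (fun i => (e i : ℂ)) := by
    calc _ = star U * (U * diagonal (fun i => (d i : ℂ)) * star U) * V := by
          simp only [← Matrix.mul_assoc, Unitary.star_mul_self_of_mem hU, Matrix.one_mul]
      _ = _ := by
          rw [h]; simp only [Matrix.mul_assoc, Unitary.star_mul_self_of_mem hV, Matrix.mul_one]
  calc _ = U * (diagonal (fun i => (f (d i) : ℂ)) * (star U * V)) * star V := by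
        simp only [Matrix.mul_assoc, Unitary.mul_star_self_of_mem hV, Matrix.mul_one]
    _ = _ := by
        rw [diagonal_map_mul_eq_mul_diagonal_map intertwine f]
        simp only [← Matrix.mul_assoc, Unitary.mul_star_self_of_mem hU, Matrix.one_mul]

theorem mpow_unitary_conj_diagonal {U : Matrix n n ℂ} (hU : U ∈ unitaryGroup n ℂ) (d : n → ℝ)
    (p : ℝ) :
    mpow (U * diagonal (fun i => (d i : ℂ)) * star U) p =
      U * diagonal (fun i => ((d i ^ p : ℝ) : ℂ)) * star U := by
  have hA : (U * diagonal (fun i => (d i : ℂ)) * star U).IsHermitian :=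
    isHermitian_mul_mul_conjTranspose _ (isHermitian_diagonal_iff.2 fun i => Complex.conj_ofReal _)
  rw [mpow, dif_pos hA]
  exact unitary_conj_diagonal_map_eq hA.eigenvectorUnitary.2 hU hA.spectral_theorem.symm (· ^ p)

theorem trace_mpow_re {A : Matrix n n ℂ} (hA : A.IsHermitian) (p : ℝ) :
    (trace (mpow A p)).re = ∑ i, hA.eigenvalues i ^ p := by
  rw [mpow, dif_pos hA, trace_mul_cycle, Unitary.star_mul_self_of_mem hA.eigenvectorUnitary.2,
    Matrix.one_mul, trace_diagonal, Complex.re_sum]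
  simp only [Complex.ofReal_re]

theorem trace_mul_unitary_conj_diagonal (C : Matrix n n ℂ) {U : Matrix n n ℂ} (g : n → ℂ) :
    trace (C * (U * diagonal g * star U)) = ∑ i, (star U * C * U) i i * g i := by
  rw [← Matrix.mul_assoc, trace_mul_cycle, ← Matrix.mul_assoc]
  simp only [trace, diag_apply, mul_diagonal]

theorem mul_diagonal_mul_star_apply_self (W : Matrix n n ℂ) (d : n → ℝ) (i : n) :
    (W * diagonal (fun k => (d k : ℂ)) * star W) i i =
      ((∑ k, Complex.normSq (W i k) * d k : ℝ) : ℂ) := by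
  rw [mul_apply]
  simp only [mul_diagonal, star_apply, Complex.ofReal_sum, Complex.ofReal_mul]
  refine Finset.sum_congr rfl fun k _ => ?_
  rw [← Complex.mul_conj, Complex.star_def]
  ring

theorem normSq_mem_doublyStochastic {W : Matrix n n ℂ} (hW : W ∈ unitaryGroup n ℂ) :
    of (fun i k => Complex.normSq (W i k)) ∈ doublyStochastic ℝ n := by
  have row_sum {V : Matrix n n ℂ} (hV : V ∈ unitaryGroup n ℂ) (i : n) :
      ∑ k, Complex.normSq (V i k) = 1 := by
    have := mul_diagonal_mul_star_apply_self V 1 i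
    simp only [Pi.one_apply, Complex.ofReal_one, diagonal_one,
      Unitary.mul_star_self_of_mem hV, one_apply_eq, mul_one] at this
    exact_mod_cast this.symm
  refine mem_doublyStochastic_iff_sum.2
    ⟨fun i k => Complex.normSq_nonneg _, row_sum hW, fun k => ?_⟩
  simpa [star_apply] using row_sum (Unitary.star_mem hW) k

theorem sum_map_eigenvalues_le_sum_map_diag {s : Set ℝ} {f : ℝ → ℝ} (hf : ConcaveOn ℝ s f)
    {A : Matrix n n ℂ} (hA : A.IsHermitian) (hs : ∀ k, hA.eigenvalues k ∈ s)
    {U : Matrix n n ℂ} (hU : U ∈ unitaryGroup n ℂ) :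
    ∑ k, f (hA.eigenvalues k) ≤ ∑ i, f ((star U * A * U) i i).re := by
  set W := star U * (hA.eigenvectorUnitary : Matrix n n ℂ)
  have hconj : star U * A * U = W * diagonal (fun k => (hA.eigenvalues k : ℂ)) * star W := by
    conv_lhs => rw [hA.spectral_theorem]
    simp [W, Matrix.mul_assoc, Function.comp_def]
  have hW : W ∈ unitaryGroup n ℂ := mul_mem (Unitary.star_mem hU) hA.eigenvectorUnitary.2
  obtain ⟨hw_nonneg, hw_row, hw_col⟩ :=
    mem_doublyStochastic_iff_sum.1 (normSq_mem_doublyStochastic hW)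
  simp only [of_apply] at hw_nonneg hw_row hw_col
  calc ∑ k, f (hA.eigenvalues k)
      = ∑ i, ∑ k, Complex.normSq (W i k) • f (hA.eigenvalues k) := by
        rw [Finset.sum_comm]; simp only [smul_eq_mul, ← Finset.sum_mul, hw_col, one_mul]
    _ ≤ ∑ i, f (∑ k, Complex.normSq (W i k) • hA.eigenvalues k) :=
        Finset.sum_le_sum fun i _ =>
          hf.le_map_sum (fun k _ => hw_nonneg i k) (hw_row i) fun k _ => hs k
    _ = ∑ i, f ((star U * A * U) i i).re := by
        simp only [hconj, mul_diagonal_mul_star_apply_self, Complex.ofReal_re, smul_eq_mul]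

end Matrix

section CarlenLieb

open Matrix Filter Topology

variable {n : Type*} [Fintype n] [DecidableEq n]

noncomputable def carlenLiebFunctional (r : ℝ) (C B : Matrix n n ℂ) : ℝ :=
  (trace (C * mpow B (1 - r) + (r - 1) • B)).re

theorem carlenLiebFunctional_unitary_conj_diagonal (r : ℝ) (C : Matrix n n ℂ)
    {U : Matrix n n ℂ} (hU : U ∈ unitaryGroup n ℂ) (β : n → ℝ) :
    carlenLiebFunctional r C (U * diagonal (fun i => (β i : ℂ)) * star U) =
      ∑ i, (((star U * C * U) i i).re * β i ^ (1 - r) + (r - 1) * β i) := by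
  have htrace := trace_mul_unitary_conj_diagonal 1 (U := U) (fun i => (β i : ℂ))
  rw [Matrix.one_mul, Matrix.mul_one, Unitary.star_mul_self_of_mem hU] at htrace
  rw [carlenLiebFunctional, mpow_unitary_conj_diagonal hU, trace_add, trace_smul, htrace,
    trace_mul_unitary_conj_diagonal]
  simp [Complex.re_sum, Finset.sum_add_distrib, Finset.mul_sum, one_apply]

theorem mul_sum_rpow_eigenvalues_le_carlenLiebFunctional {r : ℝ} (hr : 1 ≤ r)
    {C B : Matrix n n ℂ} (hC : C.PosSemidef) (hB : B.PosDef) :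
    r * ∑ k, hC.1.eigenvalues k ^ (1 / r) ≤ carlenLiebFunctional r C B := by
  have hr0 : 0 < r := zero_lt_one.trans_le hr
  set U : Matrix n n ℂ := ↑hB.1.eigenvectorUnitary
  have hU : U ∈ unitaryGroup n ℂ := hB.1.eigenvectorUnitary.2
  set c : n → ℝ := fun i => ((star U * C * U) i i).re
  have hc : ∀ i, 0 ≤ c i := fun i =>
    (Complex.nonneg_iff.1 (hC.conjTranspose_mul_mul_same U).diag_nonneg).1
  have hjensen : ∑ k, hC.1.eigenvalues k ^ (1 / r) ≤ ∑ i, c i ^ (1 / r) :=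
    sum_map_eigenvalues_le_sum_map_diag
      (Real.concaveOn_rpow (by positivity) (div_le_one_of_le₀ hr hr0.le)) hC.1
      (fun k => Set.mem_Ici.2 (hC.eigenvalues_nonneg k)) hU
  calc r * ∑ k, hC.1.eigenvalues k ^ (1 / r)
      ≤ ∑ i, r * c i ^ (1 / r) := by rw [← Finset.mul_sum]; gcongr
    _ ≤ ∑ i, (c i * hB.1.eigenvalues i ^ (1 - r) + (r - 1) * hB.1.eigenvalues i) :=
        Finset.sum_le_sum fun i _ =>
          mul_rpow_one_div_le_young hr (hc i) (hB.eigenvalues_pos i)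
    _ = carlenLiebFunctional r C B := by
        conv_rhs => rw [hB.1.spectral_theorem]
        exact (carlenLiebFunctional_unitary_conj_diagonal r C hU _).symm

theorem exists_carlenLiebFunctional_le {r : ℝ} (hr : 1 ≤ r) {C : Matrix n n ℂ}
    (hC : C.PosSemidef) {ε : ℝ} (hε : 0 < ε) :
    ∃ B : Matrix n n ℂ, B.PosDef ∧
      carlenLiebFunctional r C B ≤ r * ∑ k, (hC.1.eigenvalues k + ε) ^ (1 / r) := by
  have hr0 : 0 < r := zero_lt_one.trans_le hr
  set V : Matrix n n ℂ := ↑hC.1.eigenvectorUnitary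
  have hV : V ∈ unitaryGroup n ℂ := hC.1.eigenvectorUnitary.2
  set lam := hC.1.eigenvalues
  set t : n → ℝ := fun k => (lam k + ε) ^ (1 / r)
  have hlam_ε : ∀ k, 0 < lam k + ε := fun k =>
    add_pos_of_nonneg_of_pos (hC.eigenvalues_nonneg k) hε
  have ht : ∀ k, 0 < t k := fun k => Real.rpow_pos_of_pos (hlam_ε k) _
  refine ⟨V * diagonal (fun k => (t k : ℂ)) * star V,
    (PosDef.diagonal fun k => by exact_mod_cast ht k).mul_mul_conjTranspose_same
      (vecMul_injective_of_isUnit (Unitary.isUnit_coe (U := hC.1.eigenvectorUnitary))), ?_⟩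
  have hdiag : star V * C * V = diagonal (fun k => (lam k : ℂ)) := by
    simpa [Function.comp_def] using hC.1.conjStarAlgAut_star_eigenvectorUnitary
  have hterm : ∀ k, lam k * t k ^ (1 - r) ≤ t k := fun k => by
    have htr : t k ^ r = lam k + ε := by
      simp only [t, one_div]; exact Real.rpow_inv_rpow (hlam_ε k).le hr0.ne'
    calc lam k * t k ^ (1 - r) ≤ t k ^ r * t k ^ (1 - r) :=
          mul_le_mul_of_nonneg_right (by linarith) (Real.rpow_nonneg (ht k).le _)
      _ = t k := by rw [← Real.rpow_add (ht k), add_sub_cancel, Real.rpow_one]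
  rw [carlenLiebFunctional_unitary_conj_diagonal r C hV, hdiag, Finset.mul_sum]
  refine Finset.sum_le_sum fun k _ => ?_
  simp only [diagonal_apply_eq, Complex.ofReal_re]
  linarith [hterm k]

theorem iInf_carlenLiebFunctional {r : ℝ} (hr : 1 ≤ r) {C : Matrix n n ℂ}
    (hC : C.PosSemidef) :
    ⨅ B : {B : Matrix n n ℂ // B.PosDef}, carlenLiebFunctional r C B =
      r * ∑ k, hC.1.eigenvalues k ^ (1 / r) := by
  have hr0 : 0 < r := zero_lt_one.trans_le hr
  have lower : ∀ B : {B : Matrix n n ℂ // B.PosDef},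
      r * ∑ k, hC.1.eigenvalues k ^ (1 / r) ≤ carlenLiebFunctional r C B :=
    fun B => mul_sum_rpow_eigenvalues_le_carlenLiebFunctional hr hC B.2
  have : Nonempty {B : Matrix n n ℂ // B.PosDef} := ⟨⟨1, PosDef.one⟩⟩
  refine le_antisymm ?_ (le_ciInf lower)
  set g : ℝ → ℝ := fun ε => r * ∑ k, (hC.1.eigenvalues k + ε) ^ (1 / r)
  have hg : Tendsto g (𝓝[>] 0) (𝓝 (g 0)) := by
    refine (Continuous.tendsto ?_ 0).mono_left nhdsWithin_le_nhds
    have : 0 ≤ 1 / r := by positivity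
    fun_prop (disch := assumption)
  simp only [g, add_zero] at hg
  refine ge_of_tendsto hg (eventually_nhdsWithin_of_forall fun ε hε => ?_)
  obtain ⟨B, hB, hBε⟩ := exists_carlenLiebFunctional_le hr hC (Set.mem_Ioi.1 hε)
  exact (ciInf_le ⟨_, Set.forall_mem_range.2 lower⟩ ⟨B, hB⟩).trans hBε

end CarlenLieb

/-- Carlen--Lieb variational formula: for `r ≥ 1` and `C ≥ 0`,
`Tr(C^{1/r}) = (1/r) · inf_{B > 0} Tr(C B^{1-r} + (r-1) B)`. -/
theorem stmt4 {m : Type*} [Fintype m] [DecidableEq m]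
    (r : ℝ) (hr : 1 ≤ r) (C : Matrix m m ℂ) (hC : C.PosSemidef) :
    (Matrix.trace (mpow C (1/r))).re =
      (1/r) * ⨅ B : {B : Matrix m m ℂ // B.PosDef},
        (Matrix.trace (C * mpow (B : Matrix m m ℂ) (1 - r) +
          (r - 1) • (B : Matrix m m ℂ))).re := by
  have hr0 : r ≠ 0 := (zero_lt_one.trans_le hr).ne'
  have hinf := iInf_carlenLiebFunctional hr hC
  unfold carlenLiebFunctional at hinf
  rw [Matrix.trace_mpow_re hC.1, hinf, one_div, inv_mul_cancel_left₀ hr0]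
end

section
/- Let p ≠ 0 and s > 0 be real numbers. If the function (a,b) ↦ (a^p + b^p)^s is concave on (0,∞)², then p ≤ 1 and ps ≤ 1. -/
open Matrix
open scoped ComplexOrder

/-!
Fixing the second coordinate `β` and writing `b = β ^ p`, the slice `x ↦ (x ^ p + b) ^ s` is concave
on `(0, ∞)`, so its second derivative `p s x ^ (p - 2) (x ^ p + b) ^ (s - 2) ((p s - 1) x ^ p + (p - 1) b)`
is nonpositive.
As `x ^ p` and `b` range over all positive reals, the linear form `c ((c - 1) t + (p - 1) b)` with
`c = p s` is nonpositive on the open quadrant, whence `c (c - 1) ≤ 0` and `c (p - 1) ≤ 0`.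
Since `c ≠ 0`, the first forces `0 < c ≤ 1`, and then the second gives `p ≤ 1`.
-/

open Set Filter Topology

lemma ConcaveOn.comp_prodMk_right {𝕜 E F β : Type*} [Semiring 𝕜] [PartialOrder 𝕜]
    [AddCommMonoid E] [AddCommMonoid F] [AddCommMonoid β] [PartialOrder β]
    [Module 𝕜 E] [Module 𝕜 F] [SMul 𝕜 β] {s : Set E} {t : Set F} {f : E × F → β}
    (hf : ConcaveOn 𝕜 (s ×ˢ t) f) (hs : Convex 𝕜 s) {c : F} (hc : c ∈ t) :
    ConcaveOn 𝕜 s fun x => f (x, c) :=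
  ⟨hs, fun x hx y hy a b ha hb hab => by
    simpa [Prod.smul_mk, Prod.mk_add_mk, Convex.combo_self hab] using
      hf.2 (mk_mem_prod hx hc) (mk_mem_prod hy hc) ha hb hab⟩

lemma ConcaveOn.second_deriv_nonpos {S : Set ℝ} {f f' : ℝ → ℝ} {x f'' : ℝ}
    (hf : ConcaveOn ℝ S f) (hf' : ∀ y ∈ S, HasDerivAt f (f' y) y)
    (hf'' : HasDerivAt f' f'' x) (hx : x ∈ interior S) : f'' ≤ 0 := by
  have hanti : AntitoneOn f' S := fun a ha b hb hab => by
    simpa only [(hf' a ha).deriv, (hf' b hb).deriv] using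
      hf.antitoneOn_deriv (fun y hy => (hf' y hy).differentiableAt) ha hb hab
  have hacc : AccPt x (𝓟 S) := accPt_iff_frequently_nhdsNE.2 <|
    (eventually_nhdsWithin_of_eventually_nhds (mem_interior_iff_mem_nhds.1 hx)).frequently
  exact hf''.hasDerivWithinAt.nonpos_of_antitoneOn hacc hanti

lemma nonpos_of_forall_add_mul_nonpos {α β : ℝ} (h : ∀ b : ℝ, 0 < b → α + β * b ≤ 0) : α ≤ 0 := by
  have hlim : Tendsto (fun b => α + β * b) (𝓝[>] 0) (𝓝 α) :=
    ((by fun_prop : Continuous fun b : ℝ => α + β * b).tendsto' 0 α (by simp)).mono_left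
      nhdsWithin_le_nhds
  exact le_of_tendsto hlim (eventually_mem_nhdsWithin.mono h)

lemma nonpos_and_nonpos_of_forall_mul_add_mul_nonpos {α β : ℝ}
    (h : ∀ t b : ℝ, 0 < t → 0 < b → α * t + β * b ≤ 0) : α ≤ 0 ∧ β ≤ 0 :=
  ⟨nonpos_of_forall_add_mul_nonpos fun b hb => by simpa using h 1 b one_pos hb,
    nonpos_of_forall_add_mul_nonpos fun t ht => by simpa [add_comm] using h t 1 ht one_pos⟩

section RpowAddConstRpow

variable {p s b x : ℝ}

lemma hasDerivAt_rpow_add_const_rpow (hx : 0 < x) (hb : 0 ≤ b) :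
    HasDerivAt (fun y => (y ^ p + b) ^ s) (p * s * x ^ (p - 1) * (x ^ p + b) ^ (s - 1)) x := by
  have hpos : 0 < x ^ p + b := by positivity
  convert (((Real.hasDerivAt_rpow_const (p := p) (Or.inl hx.ne')).add_const b).rpow_const
    (p := s) (Or.inl hpos.ne')) using 1
  ring

lemma hasDerivAt_rpow_add_const_rpow_deriv (hx : 0 < x) (hb : 0 ≤ b) :
    HasDerivAt (fun y => p * s * y ^ (p - 1) * (y ^ p + b) ^ (s - 1))
      (p * s * x ^ (p - 2) * (x ^ p + b) ^ (s - 2) * ((p * s - 1) * x ^ p + (p - 1) * b)) x := by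
  have hpos : 0 < x ^ p + b := by positivity
  have e1 : x ^ (p - 1) = x ^ (p - 2) * x := by
    rw [← Real.rpow_add_one hx.ne']; ring_nf
  have e2 : x ^ p = x ^ (p - 2) * x ^ 2 := by
    rw [← Real.rpow_natCast, ← Real.rpow_add hx]; ring_nf
  have e3 : (x ^ p + b) ^ (s - 1) = (x ^ p + b) ^ (s - 2) * (x ^ p + b) := by
    rw [← Real.rpow_add_one hpos.ne']; ring_nf
  refine (((Real.hasDerivAt_rpow_const (Or.inl hx.ne')).const_mul (p * s)).mul
    (((Real.hasDerivAt_rpow_const (Or.inl hx.ne')).add_const b).rpow_const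
    (Or.inl hpos.ne'))).congr_deriv ?_
  rw [show p - 1 - 1 = p - 2 by ring, show s - 1 - 1 = s - 2 by ring, e1, e3]
  linear_combination (p * s * (x ^ (p - 2) * (x ^ p + b) ^ (s - 2)) * ((1 - s) * p)) * e2

lemma curvature_nonpos_of_concaveOn_rpow_add_const_rpow
    (hf : ConcaveOn ℝ (Ioi 0) fun y => (y ^ p + b) ^ s) (hx : 0 < x) (hb : 0 ≤ b) :
    p * s * ((p * s - 1) * x ^ p + (p - 1) * b) ≤ 0 := by
  have h2 := hf.second_deriv_nonpos (fun y hy => hasDerivAt_rpow_add_const_rpow hy hb)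
    (hasDerivAt_rpow_add_const_rpow_deriv hx hb) (by rwa [interior_Ioi])
  have hfactor : 0 < x ^ (p - 2) * (x ^ p + b) ^ (s - 2) := by positivity
  refine nonpos_of_mul_nonpos_right ?_ hfactor
  linarith

end RpowAddConstRpow

/-- If `p ≠ 0`, `s > 0` and `(a,b) ↦ (a^p + b^p)^s` is concave on `(0,∞)²`,
then `p ≤ 1` and `p·s ≤ 1`. -/
theorem stmt5 (p s : ℝ) (hp : p ≠ 0) (hs : 0 < s)
    (h : ConcaveOn ℝ (Set.Ioi 0 ×ˢ Set.Ioi 0)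
      (fun z : ℝ × ℝ => (z.1 ^ p + z.2 ^ p) ^ s)) :
    p ≤ 1 ∧ p * s ≤ 1 := by
  have hcurv : ∀ t b : ℝ, 0 < t → 0 < b → p * s * ((p * s - 1) * t + (p - 1) * b) ≤ 0 := by
    intro t b ht hb
    have hslice : ConcaveOn ℝ (Ioi 0) fun y => (y ^ p + b) ^ s := by
      simpa only [Real.rpow_inv_rpow hb.le hp] using
        h.comp_prodMk_right (convex_Ioi 0) (Real.rpow_pos_of_pos hb p⁻¹)
    simpa only [Real.rpow_inv_rpow ht.le hp] using
      curvature_nonpos_of_concaveOn_rpow_add_const_rpow hslice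
        (Real.rpow_pos_of_pos ht p⁻¹) hb.le
  obtain ⟨hq, hp1⟩ := nonpos_and_nonpos_of_forall_mul_add_mul_nonpos
    (α := p * s * (p * s - 1)) (β := p * s * (p - 1))
    fun t b ht hb => by linear_combination hcurv t b ht hb
  have hq0 : 0 < p * s :=
    (mul_ne_zero hp hs.ne').lt_or_gt.resolve_left fun hneg => by nlinarith
  exact ⟨by linarith [nonpos_of_mul_nonpos_right hp1 hq0],
    by linarith [nonpos_of_mul_nonpos_right hq hq0]⟩
end

section
/- Let p ≠ 0 and s > 0 be real numbers. If the function (a,b) ↦ (a^p + b^p)^s is convex on (0,∞)², then either (ps ≥ 1 and p ≥ 1) or (p ≤ 1 and (a ↦ a^{ps} is convex, which forces ps ≥ 1 or ps ≤ 0)); in particular, when s > 0 and convexity holds, one has p ∈ (-∞, 0) ∪ [1, ∞). -/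
open Matrix
open scoped ComplexOrder

/-!
Only `p > 0` needs an argument. On the diagonal the function is `2^s t^(ps)`, so `t ↦ t^(ps)`
is convex. On a horizontal slice it is `a ↦ (a^p + c)^s` with `c > 0` arbitrary; as `c → ∞`,
`((u + c)^s - c^s) · c^(1-s) / s → u`, and convexity survives affine renormalisation and
pointwise limits, so `a ↦ a^p` is convex. A power `t^q` with `0 < q < 1` is strictly concave,
hence not convex.
-/

open Filter Set Topology

theorem ConvexOn.of_tendsto {𝕜 E β ι : Type*} [Semiring 𝕜] [PartialOrder 𝕜]
    [AddCommMonoid E] [SMul 𝕜 E] [TopologicalSpace β] [AddCommMonoid β] [PartialOrder β]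
    [OrderClosedTopology β] [SMul 𝕜 β] [ContinuousAdd β] [ContinuousConstSMul 𝕜 β]
    {l : Filter ι} [l.NeBot] {S : Set E} {F : ι → E → β} {f : E → β}
    (hS : Convex 𝕜 S) (hF : ∀ᶠ i in l, ConvexOn 𝕜 S (F i))
    (hlim : ∀ x ∈ S, Tendsto (F · x) l (𝓝 (f x))) :
    ConvexOn 𝕜 S f :=
  ⟨hS, fun x hx y hy a b ha hb hab =>
    le_of_tendsto_of_tendsto (hlim _ (hS hx hy ha hb hab))
      (((hlim x hx).const_smul a).add ((hlim y hy).const_smul b))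
      (hF.mono fun _ hi => hi.2 hx hy ha hb hab)⟩

theorem ConvexOn.comp_prodMk_right {𝕜 E F β : Type*} [Field 𝕜] [LinearOrder 𝕜]
    [AddCommGroup E] [Module 𝕜 E] [AddCommGroup F] [Module 𝕜 F] [AddCommMonoid β] [PartialOrder β]
    [SMul 𝕜 β] {S : Set E} {T : Set F} {f : E × F → β} (hf : ConvexOn 𝕜 (S ×ˢ T) f) {b : F}
    (hb : b ∈ T) : ConvexOn 𝕜 S (fun a => f (a, b)) := by
  have := hf.comp_affineMap ((LinearMap.inl 𝕜 E F).toAffineMap + AffineMap.const 𝕜 E (0, b))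
  convert this using 1
  · ext a; simp [hb]
  · ext a; simp

theorem ConvexOn.comp_diag {𝕜 E β : Type*} [Semiring 𝕜] [PartialOrder 𝕜]
    [AddCommMonoid E] [Module 𝕜 E] [AddCommMonoid β] [PartialOrder β]
    [SMul 𝕜 β] {S : Set E} {f : E × E → β} (hf : ConvexOn 𝕜 (S ×ˢ S) f) :
    ConvexOn 𝕜 S (fun a => f (a, a)) := by
  have := hf.comp_linearMap ((LinearMap.id : E →ₗ[𝕜] E).prod LinearMap.id)
  convert this using 1
  · ext a; simp
  · rfl

theorem tendsto_rpow_add_sub_rpow_mul {s : ℝ} (hs : 0 < s) (u : ℝ) :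
    Tendsto (fun c : ℝ => ((u + c) ^ s - c ^ s) * (c ^ (1 - s) / s)) atTop (𝓝 u) := by
  have hderiv : HasDerivAt (fun t : ℝ => (1 + u * t) ^ s) (u * s) 0 := by
    have h := ((hasDerivAt_id (0 : ℝ)).const_mul u).const_add 1
    simpa using h.rpow_const (p := s) (by simp)
  have hslope : Tendsto (fun c : ℝ => slope (fun t : ℝ => (1 + u * t) ^ s) 0 c⁻¹ / s)
      atTop (𝓝 u) := by
    have hinv : Tendsto (fun c : ℝ => c⁻¹) atTop (𝓝[≠] 0) :=
      tendsto_inv_atTop_nhdsGT_zero.mono_right (nhdsWithin_mono _ fun x hx => ne_of_gt hx)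
    simpa [hs.ne'] using (hderiv.tendsto_slope.comp hinv).div_const s
  refine hslope.congr' ?_
  filter_upwards [eventually_gt_atTop |u|] with c hc
  have hc0 : 0 < c := (abs_nonneg u).trans_lt hc
  have hsplit : (u + c) ^ s = c ^ s * (1 + u * c⁻¹) ^ s := by
    rw [← Real.mul_rpow hc0.le]
    · congr 1; field_simp; ring
    · rw [show 1 + u * c⁻¹ = (c + u) / c by field_simp]
      exact div_nonneg (by linarith [neg_abs_le u]) hc0.le
  have hcc : c ^ s * c ^ (1 - s) = c := by
    rw [← Real.rpow_add hc0]; simp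
  rw [slope_def_field, hsplit]
  simp only [mul_zero, add_zero, sub_zero, Real.one_rpow]
  set X := (1 + u * c⁻¹) ^ s
  field_simp
  linear_combination (1 - X) * hcc

theorem convexOn_of_forall_convexOn_rpow_add {E : Type*} [AddCommGroup E] [Module ℝ E]
    {S : Set E} {g : E → ℝ} {s : ℝ} (hs : 0 < s)
    (h : ∀ c > 0, ConvexOn ℝ S fun x => (g x + c) ^ s) : ConvexOn ℝ S g := by
  refine ConvexOn.of_tendsto (l := atTop)
    (F := fun c x => c ^ (1 - s) / s * (g x + c) ^ s - c ^ s * (c ^ (1 - s) / s))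
    (h 1 one_pos).1 ?_ fun x _ => ?_
  · filter_upwards [eventually_gt_atTop 0] with c hc
    refine (((h c hc).smul (by positivity : 0 ≤ c ^ (1 - s) / s)).add_const
      (-(c ^ s * (c ^ (1 - s) / s)))).congr fun x _ => ?_
    simp [sub_eq_add_neg]
  · exact (tendsto_rpow_add_sub_rpow_mul hs (g x)).congr fun c => by ring

theorem one_le_of_convexOn_rpow {q : ℝ} (hq : 0 < q) (h : ConvexOn ℝ (Ioi 0) fun x : ℝ => x ^ q) :
    1 ≤ q := by
  by_contra! hq1
  have hconc := (Real.strictConcaveOn_rpow hq hq1).subset Ioi_subset_Ici_self (convex_Ioi 0)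
  have hle := h.2 (mem_Ioi.2 one_pos) (mem_Ioi.2 two_pos) one_half_pos.le one_half_pos.le
    (add_halves 1)
  have hlt := hconc.2 (mem_Ioi.2 one_pos) (mem_Ioi.2 two_pos) (by norm_num) one_half_pos
    one_half_pos (add_halves 1)
  exact hle.not_gt hlt

/-- If `p ≠ 0`, `s > 0` and `(a,b) ↦ (a^p + b^p)^s` is convex on `(0,∞)²`,
then either `p ≥ 1` and `p·s ≥ 1`, or `p < 0`. -/
theorem stmt6 (p s : ℝ) (hp : p ≠ 0) (hs : 0 < s)
    (h : ConvexOn ℝ (Set.Ioi 0 ×ˢ Set.Ioi 0)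
      (fun z : ℝ × ℝ => (z.1 ^ p + z.2 ^ p) ^ s)) :
    (1 ≤ p ∧ 1 ≤ p * s) ∨ p < 0 := by
  rcases hp.lt_or_gt with hneg | hpos
  · exact Or.inr hneg
  have hslice (c : ℝ) (hc : 0 < c) : ConvexOn ℝ (Ioi 0) fun a : ℝ => (a ^ p + c) ^ s := by
    have := h.comp_prodMk_right (b := c ^ p⁻¹) (Real.rpow_pos_of_pos hc _)
    simpa only [Real.rpow_inv_rpow hc.le hp] using this
  have hdiag : ConvexOn ℝ (Ioi 0) fun t : ℝ => t ^ (p * s) := by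
    have := h.comp_diag.smul (c := (2 : ℝ) ^ (-s)) (by positivity)
    refine this.congr fun t (ht : 0 < t) => ?_
    simp only [smul_eq_mul]
    rw [← two_mul, Real.mul_rpow zero_le_two (by positivity), ← Real.rpow_mul ht.le,
      ← mul_assoc, ← Real.rpow_add two_pos]
    simp
  exact Or.inl ⟨one_le_of_convexOn_rpow hpos (convexOn_of_forall_convexOn_rpow_add hs hslice),
    one_le_of_convexOn_rpow (mul_pos hpos hs) hdiag⟩
end

section
/- Let p, q, s be nonzero real numbers with s > 0. If the function (x,y) ↦ x^{ps} y^{qs} is jointly convex on (0,∞)², then pq·(1 − (p+q)s) ≥ 0. -/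
open Matrix
open scoped ComplexOrder

/-! Restricted to the line through `(1, 1)` with direction `(u, v)`, a convex function becomes a
convex function of one variable, whose derivative is therefore monotone; so its second derivative
at `0`, which for `x ^ a * y ^ b` is the Hessian form `a (a - 1) u² + 2 a b u v + b (b - 1) v²`,
is nonnegative. A nonnegative binary quadratic form has nonpositive discriminant, here
`4 a b (a + b - 1)`, and with `a = p s`, `b = q s` this is `-4 s² · p q (1 - (p + q) s)`. -/

open Set Filter Topology

theorem ConvexOn.nonneg_of_hasDerivAt_of_hasDerivAt {f f' : ℝ → ℝ} {s : Set ℝ} {x c : ℝ}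
    (hf : ConvexOn ℝ s f) (hs : s ∈ 𝓝 x) (hf' : ∀ y ∈ s, HasDerivAt f (f' y) y)
    (hf'' : HasDerivAt f' c x) : 0 ≤ c := by
  have hmono : MonotoneOn f' s := fun y hy z hz hyz => by
    simpa only [(hf' y hy).deriv, (hf' z hz).deriv] using
      hf.monotoneOn_deriv (fun y hy => (hf' y hy).differentiableAt) hy hz hyz
  have hacc : AccPt x (𝓟 s) := by
    simpa using (PerfectSpace.univ_preperfect x (mem_univ x)).nhds_inter hs
  exact hf''.hasDerivWithinAt.nonneg_of_monotoneOn hacc hmono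

theorem hasDerivAt_one_add_mul_rpow_mul_one_add_mul_rpow {a b u v t : ℝ}
    (hu : 0 < 1 + t * u) (hv : 0 < 1 + t * v) :
    HasDerivAt (fun t => (1 + t * u) ^ a * (1 + t * v) ^ b)
      (a * u * ((1 + t * u) ^ (a - 1) * (1 + t * v) ^ b)
        + b * v * ((1 + t * u) ^ a * (1 + t * v) ^ (b - 1))) t := by
  have hline : ∀ w : ℝ, HasDerivAt (fun t : ℝ => 1 + t * w) w t := fun w => by
    simpa using ((hasDerivAt_id t).mul_const w).const_add 1
  exact (((hline u).rpow_const (Or.inl hu.ne')).mul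
    ((hline v).rpow_const (Or.inl hv.ne'))).congr_deriv (by ring)

theorem hessian_rpow_mul_rpow_nonneg_of_convexOn {a b : ℝ}
    (h : ConvexOn ℝ (Ioi 0 ×ˢ Ioi 0) (fun z : ℝ × ℝ => z.1 ^ a * z.2 ^ b)) (u v : ℝ) :
    0 ≤ a * (a - 1) * u ^ 2 + 2 * a * b * u * v + b * (b - 1) * v ^ 2 := by
  set line : ℝ →ᵃ[ℝ] ℝ × ℝ := AffineMap.lineMap (1, 1) (1 + u, 1 + v)
  have hline : ∀ t, line t = (1 + t * u, 1 + t * v) := fun t => by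
    rw [AffineMap.lineMap_apply_module']
    ext <;> simp <;> ring
  set s := line ⁻¹' (Ioi 0 ×ˢ Ioi 0)
  have hfun : (fun z : ℝ × ℝ => z.1 ^ a * z.2 ^ b) ∘ line =
      fun t => (1 + t * u) ^ a * (1 + t * v) ^ b := funext fun t => by simp [hline]
  have hconv : ConvexOn ℝ s (fun t => (1 + t * u) ^ a * (1 + t * v) ^ b) :=
    hfun ▸ h.comp_affineMap line
  have hs : s ∈ 𝓝 0 :=
    (isOpen_Ioi.prod isOpen_Ioi).preimage AffineMap.lineMap_continuous |>.mem_nhds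
      (by simp)
  have hderiv (t : ℝ) (ht : t ∈ s) := by
    simp only [s, mem_preimage, hline, mem_prod, mem_Ioi] at ht
    exact hasDerivAt_one_add_mul_rpow_mul_one_add_mul_rpow (a := a) (b := b) ht.1 ht.2
  have hderiv2 := ((hasDerivAt_one_add_mul_rpow_mul_one_add_mul_rpow (a := a - 1) (b := b)
      (u := u) (v := v) (t := 0) (by simp) (by simp)).const_mul (a * u)).add
    ((hasDerivAt_one_add_mul_rpow_mul_one_add_mul_rpow (a := a) (b := b - 1)
      (u := u) (v := v) (t := 0) (by simp) (by simp)).const_mul (b * v))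
  have hsecond := hconv.nonneg_of_hasDerivAt_of_hasDerivAt hs hderiv hderiv2
  simp only [zero_mul, add_zero, Real.one_rpow, mul_one] at hsecond
  linarith

theorem mul_mul_one_sub_add_nonneg_of_convexOn {a b : ℝ}
    (h : ConvexOn ℝ (Ioi 0 ×ˢ Ioi 0) (fun z : ℝ × ℝ => z.1 ^ a * z.2 ^ b)) :
    0 ≤ a * b * (1 - (a + b)) := by
  have hdisc := discrim_le_zero (a := a * (a - 1)) (b := 2 * a * b) (c := b * (b - 1))
    fun u => by linear_combination hessian_rpow_mul_rpow_nonneg_of_convexOn h u 1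
  rw [discrim] at hdisc
  linear_combination hdisc / 4

theorem stmt7_general (p q s : ℝ) (hs : 0 < s)
    (h : ConvexOn ℝ (Set.Ioi 0 ×ˢ Set.Ioi 0)
      (fun z : ℝ × ℝ => z.1 ^ (p * s) * z.2 ^ (q * s))) :
    0 ≤ p * q * (1 - (p + q) * s) := by
  have key : 0 ≤ s ^ 2 * (p * q * (1 - (p + q) * s)) := by
    convert mul_mul_one_sub_add_nonneg_of_convexOn h using 1
    ring
  exact nonneg_of_mul_nonneg_right key (by positivity)

/-- If `p, q, s` are nonzero with `s > 0` and `(x,y) ↦ x^{ps} y^{qs}` is jointly convex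
on `(0,∞)²`, then `p·q·(1 - (p+q)s) ≥ 0`. -/
theorem stmt7 (p q s : ℝ) (hp : p ≠ 0) (hq : q ≠ 0) (hs : 0 < s)
    (h : ConvexOn ℝ (Set.Ioi 0 ×ˢ Set.Ioi 0)
      (fun z : ℝ × ℝ => z.1 ^ (p * s) * z.2 ^ (q * s))) :
    0 ≤ p * q * (1 - (p + q) * s) :=
  stmt7_general p q s hs h
end

section
/- Let 0 < p ≤ 1 and let A₁, A₂, B₁, B₂ be positive definite n×n matrices. Set αⱼ to be the smallest eigenvalue of (Aⱼ^{p/2} Bⱼ^{q} Aⱼ^{p/2})^{1/(p+q)} for j = 1,2 with 0 < q ≤ 1. If Bⱼ^q ≥ αⱼ^{p+q} Aⱼ^{-p} for j = 1,2, then ((B₁+B₂)/2)^q ≥ ((α₁+α₂)/2)^{p+q} · ((A₁+A₂)/2)^{-p} in the Loewner order. -/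
open Matrix
open scoped ComplexOrder

/-!
Put `β = (α₁ + α₂) / 2`, `wⱼ = αⱼ / (α₁ + α₂)` and `cⱼ = β / αⱼ`. Since `wⱼ cⱼ = 1/2`, both
midpoints are convex combinations `w₁ (c₁ X₁) + w₂ (c₂ X₂)`. Operator concavity of `x ↦ x ^ q`
gives `((B₁ + B₂)/2) ^ q ≥ Σ wⱼ cⱼ ^ q Bⱼ ^ q`, and operator convexity of `x ↦ x ^ (-p)` (concavity
of `x ^ p` followed by the antitone, convex inverse) gives
`β ^ (p+q) ((A₁ + A₂)/2) ^ (-p) ≤ Σ wⱼ β ^ (p+q) cⱼ ^ (-p) Aⱼ ^ (-p)`. As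
`β ^ (p+q) cⱼ ^ (-p) = cⱼ ^ q αⱼ ^ (p+q)`, the hypotheses `αⱼ ^ (p+q) Aⱼ ^ (-p) ≤ Bⱼ ^ q` join the
two bounds.
-/

open scoped Matrix.Norms.L2Operator MatrixOrder

namespace CFC

open Set

variable {A : Type*} [CStarAlgebra A] [PartialOrder A] [StarOrderedRing A]

lemma smul_rpow {a : A} (ha : IsStrictlyPositive a) {c : ℝ} (hc : 0 < c) (y : ℝ) :
    (c • a) ^ y = c ^ y • a ^ y := by
  have hcont : ∀ s : Set ℝ, (∀ x ∈ s, x ≠ 0) → ContinuousOn (fun x : ℝ => x ^ y) s :=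
    fun s hs x hx => (Real.continuousAt_rpow_const _ _ (.inl (hs x hx))).continuousWithinAt
  rw [rpow_eq_cfc_real (ha.smul hc).nonneg, rpow_eq_cfc_real,
    ← cfc_comp_smul c _ a (hcont _ ?_), ← cfc_const_mul _ _ a (hcont _ ?_)]
  · refine cfc_congr fun x hx => ?_
    exact Real.mul_rpow hc.le (ha.spectrum_pos hx).le
  · exact fun x hx => (ha.spectrum_pos hx).ne'
  · rintro _ ⟨x, hx, rfl⟩
    exact smul_ne_zero hc.ne' (ha.spectrum_pos hx).ne'

lemma convexOn_rpow_neg {p : ℝ} (hp : p ∈ Ioc 0 1) :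
    ConvexOn ℝ {a : A | IsStrictlyPositive a} (fun a => a ^ (-p)) := by
  have hconvex := (CStarAlgebra.convexOn_ringInverse (A := A)).1
  refine ⟨hconvex, fun x hx y hy a b ha hb hab => ?_⟩
  have hxp : IsStrictlyPositive (x ^ p) := IsStrictlyPositive.rpow x p hx
  have hyp : IsStrictlyPositive (y ^ p) := IsStrictlyPositive.rpow y p hy
  calc (a • x + b • y) ^ (-p)
      = Ring.inverse ((a • x + b • y) ^ p) :=
        (inverse_rpow _ _ hp.1.ne' (hconvex hx hy ha hb hab)).symm
    _ ≤ Ring.inverse (a • x ^ p + b • y ^ p) :=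
        CStarAlgebra.ringInverse_le_ringInverse
          ((concaveOn_rpow (Ioc_subset_Icc_self hp)).2 hx.nonneg hy.nonneg ha hb hab)
          (hconvex hxp hyp ha hb hab)
    _ ≤ a • Ring.inverse (x ^ p) + b • Ring.inverse (y ^ p) :=
        CStarAlgebra.convexOn_ringInverse.2 hxp hyp ha hb hab
    _ = a • x ^ (-p) + b • y ^ (-p) := by
        rw [inverse_rpow _ _ hp.1.ne' hx, inverse_rpow _ _ hp.1.ne' hy]

lemma smul_rpow_neg_midpoint_le_rpow_midpoint {p q : ℝ} (hp : p ∈ Ioc 0 1) (hq : q ∈ Icc 0 1)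
    {a₁ a₂ b₁ b₂ : A} (ha₁ : IsStrictlyPositive a₁) (ha₂ : IsStrictlyPositive a₂)
    (hb₁ : IsStrictlyPositive b₁) (hb₂ : IsStrictlyPositive b₂) {α₁ α₂ : ℝ}
    (hα₁ : 0 < α₁) (hα₂ : 0 < α₂)
    (h₁ : α₁ ^ (p + q) • a₁ ^ (-p) ≤ b₁ ^ q) (h₂ : α₂ ^ (p + q) • a₂ ^ (-p) ≤ b₂ ^ q) :
    ((α₁ + α₂) / 2) ^ (p + q) • ((1 / 2 : ℝ) • (a₁ + a₂)) ^ (-p)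
      ≤ ((1 / 2 : ℝ) • (b₁ + b₂)) ^ q := by
  set β := (α₁ + α₂) / 2
  have hβ : 0 < β := by positivity
  have hw₁ : 0 < α₁ / (α₁ + α₂) := by positivity
  have hw₂ : 0 < α₂ / (α₁ + α₂) := by positivity
  have hw : α₁ / (α₁ + α₂) + α₂ / (α₁ + α₂) = 1 := by field_simp
  have hmid : ∀ x₁ x₂ : A, (1 / 2 : ℝ) • (x₁ + x₂)
      = (α₁ / (α₁ + α₂)) • ((β / α₁) • x₁) + (α₂ / (α₁ + α₂)) • ((β / α₂) • x₂) := by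
    intro x₁ x₂
    rw [smul_smul, smul_smul, smul_add]
    congr 2 <;> field_simp <;> ring
  have hcoeff : ∀ α : ℝ, 0 < α → β ^ (p + q) * (α / (α₁ + α₂) * (β / α) ^ (-p))
      = α / (α₁ + α₂) * ((β / α) ^ q * α ^ (p + q)) := by
    intro α hα
    rw [Real.div_rpow hβ.le hα.le, Real.div_rpow hβ.le hα.le, Real.rpow_neg hβ.le,
      Real.rpow_neg hα.le, Real.rpow_add hβ, Real.rpow_add hα]
    field_simp
  calc β ^ (p + q) • ((1 / 2 : ℝ) • (a₁ + a₂)) ^ (-p)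
      ≤ β ^ (p + q) • ((α₁ / (α₁ + α₂)) • ((β / α₁) • a₁) ^ (-p)
          + (α₂ / (α₁ + α₂)) • ((β / α₂) • a₂) ^ (-p)) := by
        rw [hmid]
        exact smul_le_smul_of_nonneg_left ((convexOn_rpow_neg hp).2 (ha₁.smul (by positivity))
          (ha₂.smul (by positivity)) hw₁.le hw₂.le hw) (by positivity)
    _ = (α₁ / (α₁ + α₂)) • (β / α₁) ^ q • α₁ ^ (p + q) • a₁ ^ (-p)
          + (α₂ / (α₁ + α₂)) • (β / α₂) ^ q • α₂ ^ (p + q) • a₂ ^ (-p) := by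
        rw [smul_rpow ha₁ (by positivity), smul_rpow ha₂ (by positivity)]
        simp only [smul_add, smul_smul, hcoeff α₁ hα₁, hcoeff α₂ hα₂]
    _ ≤ (α₁ / (α₁ + α₂)) • (β / α₁) ^ q • b₁ ^ q + (α₂ / (α₁ + α₂)) • (β / α₂) ^ q • b₂ ^ q := by
        gcongr
    _ = (α₁ / (α₁ + α₂)) • ((β / α₁) • b₁) ^ q + (α₂ / (α₁ + α₂)) • ((β / α₂) • b₂) ^ q := by
        rw [smul_rpow hb₁ (by positivity), smul_rpow hb₂ (by positivity)]
    _ ≤ ((1 / 2 : ℝ) • (b₁ + b₂)) ^ q := by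
        rw [hmid]
        exact (concaveOn_rpow hq).2 (hb₁.smul (by positivity)).nonneg
          (hb₂.smul (by positivity)).nonneg hw₁.le hw₂.le hw

end CFC

lemma loewner_iff_le {n : Type*} [Fintype n] {A B : Matrix n n ℂ} : loewner A B ↔ A ≤ B :=
  Matrix.le_iff.symm

section MatrixPower

variable {n : Type*} [Fintype n] [DecidableEq n] {A : Matrix n n ℂ}

lemma mpow_eq_rpow (hA : A.PosSemidef) (r : ℝ) : mpow A r = A ^ r := by
  rw [CFC.rpow_eq_cfc_real hA.nonneg, hA.1.cfc_eq, mpow, dif_pos hA.1]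
  rfl

lemma posDef_mpow (hA : A.PosDef) (r : ℝ) : (mpow A r).PosDef := by
  rw [mpow_eq_rpow hA.posSemidef]
  exact (hA.isStrictlyPositive.rpow A r).posDef

lemma Matrix.PosDef.mul_mul_same {B : Matrix n n ℂ} (hB : B.PosDef) (hA : A.PosDef) :
    (A * B * A).PosDef := by
  simpa only [hA.1.eq] using hB.conjTranspose_mul_mul_same
    (Matrix.mulVec_injective_iff_isUnit.mpr hA.isUnit)

lemma lambdaMin_pos [Nonempty n] (hA : A.PosDef) : 0 < lambdaMin A := by
  rw [lambdaMin, dif_pos hA.1]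
  obtain ⟨i, hi⟩ := exists_eq_ciInf_of_finite (f := hA.1.eigenvalues)
  exact hi ▸ hA.eigenvalues_pos i

end MatrixPower

/-- Key inequality (5.6): with `αⱼ` the smallest eigenvalue of
`(Aⱼ^{p/2} Bⱼ^q Aⱼ^{p/2})^{1/(p+q)}`, if `Bⱼ^q ≥ αⱼ^{p+q} Aⱼ^{-p}` for `j = 1,2`, then
`((B₁+B₂)/2)^q ≥ ((α₁+α₂)/2)^{p+q} · ((A₁+A₂)/2)^{-p}`. -/
theorem stmt9 {n : Type*} [Fintype n] [DecidableEq n]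
    (p q : ℝ) (hp0 : 0 < p) (hp1 : p ≤ 1) (hq0 : 0 < q) (hq1 : q ≤ 1)
    (A₁ A₂ B₁ B₂ : Matrix n n ℂ)
    (hA₁ : A₁.PosDef) (hA₂ : A₂.PosDef) (hB₁ : B₁.PosDef) (hB₂ : B₂.PosDef)
    (α₁ α₂ : ℝ)
    (hα₁ : α₁ = lambdaMin (mpow (mpow A₁ (p/2) * mpow B₁ q * mpow A₁ (p/2)) (1/(p+q))))
    (hα₂ : α₂ = lambdaMin (mpow (mpow A₂ (p/2) * mpow B₂ q * mpow A₂ (p/2)) (1/(p+q))))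
    (h₁ : loewner ((α₁ ^ (p+q) : ℝ) • mpow A₁ (-p)) (mpow B₁ q))
    (h₂ : loewner ((α₂ ^ (p+q) : ℝ) • mpow A₂ (-p)) (mpow B₂ q)) :
    loewner ((((α₁ + α₂) / 2) ^ (p+q) : ℝ) • mpow ((1/2 : ℝ) • (A₁ + A₂)) (-p))
      (mpow ((1/2 : ℝ) • (B₁ + B₂)) q) := by
  -- over an empty index type `lambdaMin` is the junk value `0`, but then all matrices vanish
  rcases isEmpty_or_nonempty n with hn | hn
  · exact loewner_iff_le.2 (Subsingleton.elim _ _).le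
  have hα₁pos : 0 < α₁ :=
    hα₁ ▸ lambdaMin_pos (posDef_mpow ((posDef_mpow hB₁ _).mul_mul_same (posDef_mpow hA₁ _)) _)
  have hα₂pos : 0 < α₂ :=
    hα₂ ▸ lambdaMin_pos (posDef_mpow ((posDef_mpow hB₂ _).mul_mul_same (posDef_mpow hA₂ _)) _)
  have hA : ((1/2 : ℝ) • (A₁ + A₂)).PosSemidef := (hA₁.add hA₂).posSemidef.smul (by norm_num)
  have hB : ((1/2 : ℝ) • (B₁ + B₂)).PosSemidef := (hB₁.add hB₂).posSemidef.smul (by norm_num)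
  rw [loewner_iff_le, mpow_eq_rpow hA, mpow_eq_rpow hB]
  rw [loewner_iff_le, mpow_eq_rpow hA₁.posSemidef, mpow_eq_rpow hB₁.posSemidef] at h₁
  rw [loewner_iff_le, mpow_eq_rpow hA₂.posSemidef, mpow_eq_rpow hB₂.posSemidef] at h₂
  exact CFC.smul_rpow_neg_midpoint_le_rpow_midpoint ⟨hp0, hp1⟩ ⟨hq0.le, hq1⟩
    hA₁.isStrictlyPositive hA₂.isStrictlyPositive hB₁.isStrictlyPositive hB₂.isStrictlyPositive
    hα₁pos hα₂pos h₁ h₂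
end
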